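/- Let φ and ψ be finite potent endomorphisms of a k-vector space V such that the commutator φ∘ψ − ψ∘φ has finite rank. Let A ⊆ End_k(V) be the unital k-subalgebra generated by φ and ψ, and let F = φ∘A + ψ∘A = {φ∘a + ψ∘b : a, b ∈ A}, a k-subspace of End_k(V). Then F is a finite potent subspace of End_k(V); i.e., there exists n ≥ 1 such that for every f₁,…,fₙ ∈ F the image (f₁∘⋯∘fₙ)(V) is finite-dimensional. -/

import Mathlib

/-- A subspace `F ⊆ End_k(V)` is a *finite potent subspace* if there is `n ≥ 1` such that
any composition of `n` elements of `F` has finite-dimensional image. -/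
def IsFinitePotentSubspace {k V : Type*} [Field k] [AddCommGroup V] [Module k V]
    (F : Submodule k (V →ₗ[k] V)) : Prop :=
  ∃ n : ℕ, 1 ≤ n ∧ ∀ f : Fin n → (V →ₗ[k] V), (∀ i, f i ∈ F) →
    FiniteDimensional k (LinearMap.range (List.ofFn f).prod)

/-!
Modulo the two-sided ideal of finite-rank endomorphisms, `φ` and `ψ` become commuting nilpotent
elements `x` and `y`, so the image of `A` is the commutative algebra generated by `x` and `y`,
and the image of `F` lies in its ideal `(x, y)`. An ideal generated by finitely many nilpotents
of a commutative ring is nilpotent, so products of sufficiently many elements of `F` vanish modulo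
finite-rank maps, i.e. have finite rank.
-/

open LinearMap

section FiniteRank

variable (k V : Type*) [Field k] [AddCommGroup V] [Module k V]

def finiteRankIdeal : TwoSidedIdeal (Module.End k V) :=
  .mk' {f | FiniteDimensional k (range f)}
    (by rw [Set.mem_ofPred_eq, range_zero]; infer_instance)
    (fun {f g} (_ : FiniteDimensional k (range f)) (_ : FiniteDimensional k (range g)) ↦
      Submodule.finiteDimensional_of_le (range_add_le f g))
    (fun {f} (hf : FiniteDimensional k (range f)) ↦ by rwa [Set.mem_ofPred_eq, range_neg])
    (fun {f g} (_ : FiniteDimensional k (range g)) ↦ by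
      rw [Set.mem_ofPred_eq, Module.End.mul_eq_comp, range_comp]; infer_instance)
    (fun {f g} (_ : FiniteDimensional k (range f)) ↦
      Submodule.finiteDimensional_of_le (range_comp_le_range g f))

variable {k V}

theorem mkₐ_finiteRankIdeal_eq_zero_iff {f : Module.End k V} :
    Ideal.Quotient.mkₐ k (finiteRankIdeal k V).asIdeal f = 0 ↔ FiniteDimensional k (range f) := by
  rw [Ideal.Quotient.mkₐ_eq_mk, Ideal.Quotient.eq_zero_iff_mem, TwoSidedIdeal.mem_asIdeal,
    finiteRankIdeal, TwoSidedIdeal.mem_mk']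
  rfl

end FiniteRank

theorem Ideal.exists_prod_eq_zero_of_isNilpotent {R : Type*} [CommRing R] {I : Ideal R}
    (hI : IsNilpotent I) :
    ∃ n, 1 ≤ n ∧ ∀ f : Fin n → R, (∀ i, f i ∈ I) → ∏ i, f i = 0 := by
  obtain ⟨n, hn⟩ := hI
  refine ⟨n + 1, n.succ_pos, fun f hf ↦ ?_⟩
  have hprod : ∏ i, f i ∈ I ^ (n + 1) := by
    simpa using Ideal.prod_mem_prod (s := Finset.univ) (I := fun _ ↦ I) fun i _ ↦ hf i
  simpa [hn] using Ideal.pow_le_pow_right n.le_succ hprod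

theorem Submodule.mem_map_mulLeft_sup_map_mulLeft {R A : Type*} [CommSemiring R] [Semiring A]
    [Algebra R A] {x y z : A} {M N : Submodule R A} :
    z ∈ M.map (LinearMap.mulLeft R x) ⊔ N.map (LinearMap.mulLeft R y) ↔
      ∃ a ∈ M, ∃ b ∈ N, x * a + y * b = z := by
  simp [Submodule.mem_sup]

open scoped IsMulCommutative in
theorem exists_forall_list_prod_eq_zero_of_commute {R A : Type*} [CommRing R] [Ring A]
    [Algebra R A] {x y : A} (hxy : Commute x y) (hx : IsNilpotent x) (hy : IsNilpotent y) :
    ∃ n, 1 ≤ n ∧ ∀ f : Fin n → A,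
      (∀ i, ∃ a ∈ Algebra.adjoin R {x, y}, ∃ b ∈ Algebra.adjoin R {x, y}, f i = x * a + y * b) →
        (List.ofFn f).prod = 0 := by
  set B := Algebra.adjoin R {x, y}
  have : IsMulCommutative B := Algebra.isMulCommutative_adjoin R <| by
    rintro a (rfl | rfl) b (rfl | rfl) <;> first | rfl | exact hxy.eq | exact hxy.symm.eq
  let x' : B := ⟨x, Algebra.subset_adjoin (by simp)⟩
  let y' : B := ⟨y, Algebra.subset_adjoin (by simp)⟩
  have hI : IsNilpotent (Ideal.span {x', y'}) := by
    refine (Ideal.FG.isNilpotent_iff_le_nilradical (Submodule.fg_span (Set.toFinite _))).2 <|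
      Ideal.span_le.2 ?_
    rintro _ (rfl | rfl) <;> rw [SetLike.mem_coe, mem_nilradical, ← IsNilpotent.map_iff
      (f := B.val) Subtype.val_injective]
    exacts [hx, hy]
  obtain ⟨n, hn, hzero⟩ := Ideal.exists_prod_eq_zero_of_isNilpotent hI
  refine ⟨n, hn, fun f hf ↦ ?_⟩
  choose a ha b hb hfab using hf
  let g : Fin n → B := fun i ↦ x' * ⟨a i, ha i⟩ + y' * ⟨b i, hb i⟩
  have hg : ∀ i, g i ∈ Ideal.span {x', y'} := fun i ↦
    Ideal.add_mem _ (Ideal.mul_mem_right _ _ (Ideal.subset_span (by simp)))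
      (Ideal.mul_mem_right _ _ (Ideal.subset_span (by simp)))
  have hfg : f = B.val ∘ g := funext hfab
  rw [hfg, ← List.map_ofFn, ← map_list_prod, List.prod_ofFn, hzero g hg, map_zero]

/-- if `φ`, `ψ` are finite potent with finite rank commutator, and `A` is the
unital subalgebra of `End_k(V)` generated by `φ` and `ψ`, then `F = φ∘A + ψ∘A` is a
finite potent subspace of `End_k(V)`. -/
theorem isFinitePotentSubspace_of_finiteRank_commutator
    {k V : Type*} [Field k] [AddCommGroup V] [Module k V]
    (φ ψ : V →ₗ[k] V)
    (hφ : ∃ n : ℕ, 1 ≤ n ∧ FiniteDimensional k (LinearMap.range (φ ^ n)))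
    (hψ : ∃ n : ℕ, 1 ≤ n ∧ FiniteDimensional k (LinearMap.range (ψ ^ n)))
    (hcomm : FiniteDimensional k (LinearMap.range (φ * ψ - ψ * φ)))
    (A : Subalgebra k (V →ₗ[k] V)) (hA : A = Algebra.adjoin k {φ, ψ})
    (F : Submodule k (V →ₗ[k] V))
    (hF : F = Submodule.map (LinearMap.mulLeft k φ) (Subalgebra.toSubmodule A)
            ⊔ Submodule.map (LinearMap.mulLeft k ψ) (Subalgebra.toSubmodule A)) :
    IsFinitePotentSubspace F := by
  set π := Ideal.Quotient.mkₐ k (finiteRankIdeal k V).asIdeal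
  have hxy : Commute (π φ) (π ψ) := by
    rw [Commute, SemiconjBy, ← sub_eq_zero, ← map_mul, ← map_mul, ← map_sub]
    exact mkₐ_finiteRankIdeal_eq_zero_iff.2 hcomm
  have hnil {χ : V →ₗ[k] V} : (∃ n, 1 ≤ n ∧ FiniteDimensional k (range (χ ^ n))) →
      IsNilpotent (π χ) := fun ⟨n, _, hn⟩ ↦
    ⟨n, by rw [← map_pow]; exact mkₐ_finiteRankIdeal_eq_zero_iff.2 hn⟩
  obtain ⟨n, hn, hzero⟩ :=
    exists_forall_list_prod_eq_zero_of_commute (R := k) hxy (hnil hφ) (hnil hψ)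
  have hπA : ∀ a ∈ A, π a ∈ Algebra.adjoin k {π φ, π ψ} := fun a ha ↦ by
    rw [← Set.image_pair, Algebra.adjoin_image, ← hA]
    exact Subalgebra.mem_map.2 ⟨a, ha, rfl⟩
  refine ⟨n, hn, fun f hf ↦ mkₐ_finiteRankIdeal_eq_zero_iff.1 ?_⟩
  rw [map_list_prod, List.map_ofFn]
  refine hzero _ fun i ↦ ?_
  obtain ⟨a, ha, b, hb, hfi⟩ := Submodule.mem_map_mulLeft_sup_map_mulLeft.1 (hF ▸ hf i)
  exact ⟨π a, hπA a ha, π b, hπA b hb,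
    by rw [Function.comp_apply, ← hfi, map_add, map_mul, map_mul]⟩
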